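/- arXiv:2508.20761 — 2 statements merged into one kernel-verified Lean document; each statement's English description precedes it below -/
import Mathlib

section
/- Matrix Jensen inequality implying ECRB ⪰ BCRB: Let (Ω, 𝓕, P) be a probability space and J : Ω → Matrix(n,n,ℂ) a measurable random Hermitian matrix such that J(ω) is positive definite almost surely, and both J and J(ω)^{-1} have entrywise integrable entries. Then E[J] is positive definite, and the matrix E[J^{-1}] − (E[J])^{-1} is positive semidefinite; i.e. the expected inverse Fisher information matrix (ECRB) dominates the inverse of the expected Fisher information matrix (BCRB) in the Loewner order. -/
/-!
For `K ≻ 0` and Hermitian `B`, the matrix `(K⁻¹ - B) K (K⁻¹ - B) ⪰ 0` expands to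
`K⁻¹ ⪰ 2B - BKB`. Apply this with `K = J ω` and `B = E[J]⁻¹` and take expectations, which are
linear and preserve the Loewner order: `E[J⁻¹] ⪰ 2B - B E[J] B = E[J]⁻¹`.
-/

open MeasureTheory
open scoped ComplexOrder

namespace MeasureTheory

variable {α 𝕜 : Type*} [MeasurableSpace α] {μ : Measure α} [RCLike 𝕜]

theorem integral_pos_of_ae_pos [NeZero μ] {f : α → 𝕜} (hf : Integrable f μ)
    (hpos : ∀ᵐ x ∂μ, 0 < f x) : 0 < ∫ x, f x ∂μ := by
  have hre : ∀ᵐ x ∂μ, 0 < RCLike.re (f x) := hpos.mono fun x hx => (RCLike.pos_iff.1 hx).1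
  have him : ∀ᵐ x ∂μ, RCLike.im (f x) = 0 := hpos.mono fun x hx => (RCLike.pos_iff.1 hx).2
  refine RCLike.pos_iff.2 ⟨?_, ?_⟩
  · rw [← integral_re hf,
      integral_pos_iff_support_of_nonneg_ae (hre.mono fun x hx => hx.le) hf.re]
    refine pos_iff_ne_zero.2 fun hzero => ?_
    obtain ⟨x, hx, hx'⟩ := ((measure_eq_zero_iff_ae_notMem.1 hzero).and hre).exists
    exact hx hx'.ne'
  · rw [← integral_im hf, integral_eq_zero_of_ae him]

end MeasureTheory

namespace Matrix

variable {α 𝕜 l m n : Type*} [MeasurableSpace α] {μ : Measure α} [RCLike 𝕜]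

noncomputable def entrywiseIntegral (μ : Measure α) (M : α → Matrix m n 𝕜) : Matrix m n 𝕜 :=
  of fun i j => ∫ ω, M ω i j ∂μ

@[simp]
theorem entrywiseIntegral_apply (M : α → Matrix m n 𝕜) (i : m) (j : n) :
    entrywiseIntegral μ M i j = ∫ ω, M ω i j ∂μ := rfl

variable {M N : α → Matrix m n 𝕜}

theorem entrywiseIntegral_add (hM : ∀ i j, Integrable (fun ω => M ω i j) μ)
    (hN : ∀ i j, Integrable (fun ω => N ω i j) μ) :
    entrywiseIntegral μ (fun ω => M ω + N ω) = entrywiseIntegral μ M + entrywiseIntegral μ N := by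
  ext i j
  exact integral_add (hM i j) (hN i j)

theorem entrywiseIntegral_sub (hM : ∀ i j, Integrable (fun ω => M ω i j) μ)
    (hN : ∀ i j, Integrable (fun ω => N ω i j) μ) :
    entrywiseIntegral μ (fun ω => M ω - N ω) = entrywiseIntegral μ M - entrywiseIntegral μ N := by
  ext i j
  exact integral_sub (hM i j) (hN i j)

theorem entrywiseIntegral_const [IsProbabilityMeasure μ] (A : Matrix m n 𝕜) :
    entrywiseIntegral μ (fun _ => A) = A := by
  ext i j
  simp

variable [Fintype m]

theorem integrable_const_mul_apply (A : Matrix l m 𝕜)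
    (hM : ∀ i j, Integrable (fun ω => M ω i j) μ) (i : l) (j : n) :
    Integrable (fun ω => (A * M ω) i j) μ := by
  simp only [mul_apply]
  exact integrable_finsetSum _ fun k _ => (hM k j).const_mul _

theorem integrable_mul_const_apply (B : Matrix m l 𝕜) {M : α → Matrix n m 𝕜}
    (hM : ∀ i j, Integrable (fun ω => M ω i j) μ) (i : n) (j : l) :
    Integrable (fun ω => (M ω * B) i j) μ := by
  simp only [mul_apply]
  exact integrable_finsetSum _ fun k _ => (hM i k).mul_const _

theorem entrywiseIntegral_const_mul (A : Matrix l m 𝕜)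
    (hM : ∀ i j, Integrable (fun ω => M ω i j) μ) :
    entrywiseIntegral μ (fun ω => A * M ω) = A * entrywiseIntegral μ M := by
  ext i j
  simp only [entrywiseIntegral_apply, mul_apply]
  rw [integral_finsetSum _ fun k _ => (hM k j).const_mul _]
  simp only [integral_const_mul]

theorem entrywiseIntegral_mul_const (B : Matrix m l 𝕜) {M : α → Matrix n m 𝕜}
    (hM : ∀ i j, Integrable (fun ω => M ω i j) μ) :
    entrywiseIntegral μ (fun ω => M ω * B) = entrywiseIntegral μ M * B := by
  ext i j
  simp only [entrywiseIntegral_apply, mul_apply]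
  rw [integral_finsetSum _ fun k _ => (hM i k).mul_const _]
  simp only [integral_mul_const]

section Square

variable {M : α → Matrix n n 𝕜}

theorem IsHermitian.entrywiseIntegral (hM : ∀ᵐ ω ∂μ, (M ω).IsHermitian) :
    (entrywiseIntegral μ M).IsHermitian := by
  ext i j
  simp only [conjTranspose_apply, entrywiseIntegral_apply, RCLike.star_def, ← integral_conj]
  exact integral_congr_ae (hM.mono fun ω hω => hω.apply i j)

variable [Fintype n]

theorem integrable_dotProduct_mulVec (hM : ∀ i j, Integrable (fun ω => M ω i j) μ) (x : n → 𝕜) :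
    Integrable (fun ω => star x ⬝ᵥ (M ω *ᵥ x)) μ := by
  simp only [dotProduct, mulVec, Finset.mul_sum]
  exact integrable_finsetSum _ fun i _ => integrable_finsetSum _ fun j _ =>
    ((hM i j).mul_const _).const_mul _

theorem dotProduct_mulVec_entrywiseIntegral (hM : ∀ i j, Integrable (fun ω => M ω i j) μ)
    (x : n → 𝕜) :
    star x ⬝ᵥ (entrywiseIntegral μ M *ᵥ x) = ∫ ω, star x ⬝ᵥ (M ω *ᵥ x) ∂μ := by
  simp only [dotProduct, mulVec, entrywiseIntegral_apply, Finset.mul_sum]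
  rw [integral_finsetSum _ fun i _ => integrable_finsetSum _ fun j _ =>
    ((hM i j).mul_const _).const_mul _]
  refine Finset.sum_congr rfl fun i _ => ?_
  rw [integral_finsetSum _ fun j _ => ((hM i j).mul_const _).const_mul _]
  simp only [integral_const_mul, integral_mul_const]

theorem PosSemidef.entrywiseIntegral (hM : ∀ i j, Integrable (fun ω => M ω i j) μ)
    (hpsd : ∀ᵐ ω ∂μ, (M ω).PosSemidef) : (entrywiseIntegral μ M).PosSemidef := by
  refine .of_dotProduct_mulVec_nonneg
    (.entrywiseIntegral (hpsd.mono fun _ h => h.isHermitian)) fun x => ?_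
  rw [dotProduct_mulVec_entrywiseIntegral hM]
  exact integral_nonneg_of_ae (hpsd.mono fun _ h => h.dotProduct_mulVec_nonneg x)

theorem PosDef.entrywiseIntegral [NeZero μ] (hM : ∀ i j, Integrable (fun ω => M ω i j) μ)
    (hpd : ∀ᵐ ω ∂μ, (M ω).PosDef) : (entrywiseIntegral μ M).PosDef := by
  refine .of_dotProduct_mulVec_pos
    (.entrywiseIntegral (hpd.mono fun _ h => h.isHermitian)) fun x hx => ?_
  rw [dotProduct_mulVec_entrywiseIntegral hM]
  exact integral_pos_of_ae_pos (integrable_dotProduct_mulVec hM x)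
    (hpd.mono fun _ h => h.dotProduct_mulVec_pos hx)

end Square

theorem PosDef.posSemidef_inv_sub_two_smul_add_mul_mul {R : Type*} [Field R] [PartialOrder R]
    [StarRing R] [Fintype n] [DecidableEq n] {K : Matrix n n R} (hK : K.PosDef)
    {B : Matrix n n R} (hB : B.IsHermitian) : (K⁻¹ - 2 • B + B * K * B).PosSemidef := by
  have hdet : IsUnit K.det := (isUnit_iff_isUnit_det K).1 hK.isUnit
  convert hK.posSemidef.conjTranspose_mul_mul_same (K⁻¹ - B) using 1
  rw [(hK.isHermitian.inv.sub hB).eq, sub_mul, sub_mul, mul_sub, mul_sub, nonsing_inv_mul K hdet,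
    mul_assoc B K K⁻¹, mul_nonsing_inv K hdet, mul_one, one_mul, one_mul, two_smul]
  abel

end Matrix

open Matrix in
theorem expected_inverse_dominates_inverse_expectation_general
    {Ω : Type*} [MeasurableSpace Ω] (P : Measure Ω) [IsProbabilityMeasure P]
    {n : ℕ} (J : Ω → Matrix (Fin n) (Fin n) ℂ)
    (hJ_posdef : ∀ᵐ ω ∂P, (J ω).PosDef)
    (hJ_int : ∀ i j, Integrable (fun ω => J ω i j) P)
    (hJinv_int : ∀ i j, Integrable (fun ω => (J ω)⁻¹ i j) P) :
    (Matrix.of fun i j => ∫ ω, J ω i j ∂P).PosDef ∧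
      ((Matrix.of fun i j => ∫ ω, (J ω)⁻¹ i j ∂P) -
        (Matrix.of fun i j => ∫ ω, J ω i j ∂P)⁻¹).PosSemidef := by
  have hEJ : (entrywiseIntegral P J).PosDef := .entrywiseIntegral hJ_int hJ_posdef
  refine ⟨hEJ, ?_⟩
  set B := (entrywiseIntegral P J)⁻¹
  have hBJB : ∀ i j, Integrable (fun ω => (B * J ω * B) i j) P :=
    integrable_mul_const_apply B (integrable_const_mul_apply B hJ_int)
  have hpointwise : ∀ᵐ ω ∂P, ((J ω)⁻¹ - 2 • B + B * J ω * B).PosSemidef :=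
    hJ_posdef.mono fun _ h => h.posSemidef_inv_sub_two_smul_add_mul_mul hEJ.inv.isHermitian
  have hint : ∀ i j, Integrable (fun ω => ((J ω)⁻¹ - 2 • B) i j) P := fun i j =>
    (hJinv_int i j).sub (integrable_const _)
  have hmean : entrywiseIntegral P (fun ω => (J ω)⁻¹ - 2 • B + B * J ω * B) =
      entrywiseIntegral P (fun ω => (J ω)⁻¹) - B := by
    rw [entrywiseIntegral_add hint hBJB,
      entrywiseIntegral_sub (N := fun _ => 2 • B) hJinv_int fun _ _ => integrable_const _,
      entrywiseIntegral_const, entrywiseIntegral_mul_const B (integrable_const_mul_apply B hJ_int),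
      entrywiseIntegral_const_mul B hJ_int,
      nonsing_inv_mul _ ((isUnit_iff_isUnit_det _).1 hEJ.isUnit), one_mul, two_smul]
    abel
  exact hmean ▸ .entrywiseIntegral (fun i j => (hint i j).add (hBJB i j)) hpointwise

/-- Matrix Jensen inequality implying ECRB ⪰ BCRB: for a random Hermitian,
almost surely positive definite matrix `J` with integrable entries and
integrable inverse entries, `E[J]` is positive definite and
`E[J⁻¹] − (E[J])⁻¹` is positive semidefinite (Loewner order). -/
theorem expected_inverse_dominates_inverse_expectation
    {Ω : Type*} [MeasurableSpace Ω] (P : Measure Ω) [IsProbabilityMeasure P]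
    {n : ℕ} (J : Ω → Matrix (Fin n) (Fin n) ℂ)
    (hJ_meas : ∀ i j, Measurable fun ω => J ω i j)
    (hJ_posdef : ∀ᵐ ω ∂P, (J ω).PosDef)
    (hJ_int : ∀ i j, Integrable (fun ω => J ω i j) P)
    (hJinv_int : ∀ i j, Integrable (fun ω => (J ω)⁻¹ i j) P) :
    (Matrix.of fun i j => ∫ ω, J ω i j ∂P).PosDef ∧
      ((Matrix.of fun i j => ∫ ω, (J ω)⁻¹ i j ∂P) -
        (Matrix.of fun i j => ∫ ω, J ω i j ∂P)⁻¹).PosSemidef :=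
  expected_inverse_dominates_inverse_expectation_general P J hJ_posdef hJ_int hJinv_int
end

section
/- Bayesian Fisher information of the scalar LGO model (Eq. (fim_LGO) of the paper, real scalar case M = 1): Let θ ~ N(0,1); let the analog measurement be x_a = h·θ + u_a with u_a ~ N(0, σ_a²) independent of θ (h ∈ ℝ, σ_a > 0); and let the quantized measurement be the binary variable b = 1{t·θ + u_q ≥ τ} with u_q ~ N(0, σ_q²) independent of (θ, u_a) (t, τ ∈ ℝ, σ_q > 0). The joint density of (θ, x_a, b) with respect to Lebesgue ⊗ Lebesgue ⊗ counting measure is f(θ,x_a,b) = φ(θ) · (1/σ_a)φ((x_a − hθ)/σ_a) · q(θ)^b (1−q(θ))^{1−b}, where q(θ) = Φ((tθ − τ)/σ_q). Then the Bayesian Fisher information J = E[(∂_θ log f(θ,x_a,b))²] satisfies J = 1 + h²/σ_a² + (t²/σ_q²) · E[ φ(Z)² / (Φ(Z)·Φ(−Z)) ], where Z = (tθ − τ)/σ_q and the last expectation is over θ ~ N(0,1). -/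
open MeasureTheory ProbabilityTheory

/-- The standard normal density `φ(t) = (2π)^{-1/2} exp(−t²/2)`. -/
noncomputable def stdNormalPDF (t : ℝ) : ℝ :=
  (Real.sqrt (2 * Real.pi))⁻¹ * Real.exp (-t ^ 2 / 2)

/-- The standard normal CDF `Φ(z) = ∫_{−∞}^z φ(t) dt`. -/
noncomputable def stdNormalCDF (z : ℝ) : ℝ :=
  ∫ t in Set.Iic z, stdNormalPDF t

/-- Joint density of `(θ, x_a, b)` in the scalar LGO model with respect to
Lebesgue ⊗ Lebesgue ⊗ counting measure:
`f(θ,x_a,b) = φ(θ) · (1/σ_a) φ((x_a − hθ)/σ_a) · q(θ)^b (1−q(θ))^{1−b}`,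
where `q(θ) = Φ((tθ − τ)/σ_q)`. -/
noncomputable def lgoDensity (h t τ σa σq : ℝ) (θ xa : ℝ) (b : Fin 2) : ℝ :=
  stdNormalPDF θ * (σa⁻¹ * stdNormalPDF ((xa - h * θ) / σa)) *
    (stdNormalCDF ((t * θ - τ) / σq)) ^ (b : ℕ) *
      (1 - stdNormalCDF ((t * θ - τ) / σq)) ^ (1 - (b : ℕ))

/-!
The score splits into the analog score `-θ + h/σ_a² (x_a - hθ)` and the quantized score
`(t/σ_q) φ(z) (b/Φ(z) - (1-b)/Φ(-z))`. Summing over `b` against `Φ(z)^b Φ(-z)^(1-b)` kills the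
cross term (the quantized score has mean zero) and leaves the probit information
`φ(z)²/(Φ(z)Φ(-z))`; integrating the squared analog score over `x_a ~ N(hθ, σ_a²)` gives
`θ² + h²/σ_a²`, and `E[θ²] = 1` under the prior. The probit information is bounded, since `Φ(z)`
and `Φ(-z)` are both at least `φ(|z| + 1)` while `φ(z)² ≲ φ(|z| + 1)`, so all integrands are
integrable and Fubini applies.
-/

open Real Set Filter
open scoped NNReal

lemma stdNormalPDF_eq_gaussianPDFReal : stdNormalPDF = gaussianPDFReal 0 1 := by
  funext x
  simp [stdNormalPDF, gaussianPDFReal]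

lemma stdNormalPDF_pos (x : ℝ) : 0 < stdNormalPDF x := by
  rw [stdNormalPDF_eq_gaussianPDFReal]
  exact gaussianPDFReal_pos _ _ _ one_ne_zero

lemma stdNormalPDF_neg (x : ℝ) : stdNormalPDF (-x) = stdNormalPDF x := by
  simp [stdNormalPDF]

@[fun_prop]
lemma continuous_stdNormalPDF : Continuous stdNormalPDF := by
  unfold stdNormalPDF
  fun_prop

@[fun_prop]
lemma measurable_stdNormalPDF : Measurable stdNormalPDF :=
  continuous_stdNormalPDF.measurable

lemma integrable_stdNormalPDF : Integrable stdNormalPDF := by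
  rw [stdNormalPDF_eq_gaussianPDFReal]
  exact integrable_gaussianPDFReal 0 1

lemma hasDerivAt_stdNormalPDF (x : ℝ) :
    HasDerivAt stdNormalPDF (-x * stdNormalPDF x) x := by
  have hexponent : HasDerivAt (fun y : ℝ => -y ^ 2 / 2) (-x) x := by
    simpa [neg_div] using ((hasDerivAt_pow 2 x).div_const 2).fun_neg
  refine (hexponent.exp.const_mul (√(2 * π))⁻¹).congr_deriv ?_
  rw [stdNormalPDF]; ring

lemma hasDerivAt_stdNormalCDF (z : ℝ) : HasDerivAt stdNormalCDF (stdNormalPDF z) z := by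
  have hFTC := (intervalIntegral.integral_hasDerivAt_right
    integrable_stdNormalPDF.intervalIntegrable (a := 0) (b := z)
    measurable_stdNormalPDF.stronglyMeasurable.stronglyMeasurableAtFilter
    continuous_stdNormalPDF.continuousAt).const_add (stdNormalCDF 0)
  refine hFTC.congr_of_eventuallyEq (Eventually.of_forall fun x => ?_)
  simp only [stdNormalCDF]
  rw [intervalIntegral.integral_Iic_sub_Iic integrable_stdNormalPDF.integrableOn
    integrable_stdNormalPDF.integrableOn |>.symm]
  ring

@[fun_prop]
lemma continuous_stdNormalCDF : Continuous stdNormalCDF :=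
  continuous_iff_continuousAt.2 fun z => (hasDerivAt_stdNormalCDF z).continuousAt

@[fun_prop]
lemma measurable_stdNormalCDF : Measurable stdNormalCDF :=
  continuous_stdNormalCDF.measurable

lemma setIntegral_stdNormalPDF_pos {s : Set ℝ} (hs0 : volume s ≠ 0) :
    0 < ∫ x in s, stdNormalPDF x := by
  refine (setIntegral_pos_iff_support_of_nonneg_ae
    (Eventually.of_forall fun x => (stdNormalPDF_pos x).le)
    integrable_stdNormalPDF.integrableOn).2 ?_
  rwa [Function.support_eq_univ fun x => (stdNormalPDF_pos x).ne', univ_inter, pos_iff_ne_zero]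

lemma stdNormalCDF_pos (z : ℝ) : 0 < stdNormalCDF z :=
  setIntegral_stdNormalPDF_pos (s := Iic z) (by simp)

lemma stdNormalCDF_add_integral_Ioi (z : ℝ) :
    stdNormalCDF z + ∫ x in Ioi z, stdNormalPDF x = 1 := by
  rw [stdNormalCDF, intervalIntegral.integral_Iic_add_Ioi integrable_stdNormalPDF.integrableOn
    integrable_stdNormalPDF.integrableOn, stdNormalPDF_eq_gaussianPDFReal,
    integral_gaussianPDFReal_eq_one 0 one_ne_zero]

lemma stdNormalCDF_lt_one (z : ℝ) : stdNormalCDF z < 1 := by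
  have := setIntegral_stdNormalPDF_pos (s := Ioi z) (by simp)
  linarith [stdNormalCDF_add_integral_Ioi z]

lemma stdNormalCDF_neg (z : ℝ) : stdNormalCDF (-z) = 1 - stdNormalCDF z := by
  have hreflect : stdNormalCDF (-z) = ∫ x in Ioi z, stdNormalPDF x := by
    rw [stdNormalCDF, ← integral_comp_neg_Ioi]
    simp [stdNormalPDF_neg]
  linarith [stdNormalCDF_add_integral_Ioi z]

lemma stdNormalCDF_mono : Monotone stdNormalCDF := fun _ _ hab =>
  setIntegral_mono_set integrable_stdNormalPDF.integrableOn
    (Eventually.of_forall fun x => (stdNormalPDF_pos x).le) (Iic_subset_Iic.2 hab).eventuallyLE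

lemma stdNormalPDF_le_of_abs_le {x y : ℝ} (hxy : |x| ≤ |y|) :
    stdNormalPDF y ≤ stdNormalPDF x := by
  have hsq : x ^ 2 ≤ y ^ 2 := sq_le_sq.2 hxy
  unfold stdNormalPDF
  gcongr

lemma stdNormalPDF_abs_add_one_le_stdNormalCDF_neg_abs (z : ℝ) :
    stdNormalPDF (|z| + 1) ≤ stdNormalCDF (-|z|) := by
  have hlower : stdNormalPDF (|z| + 1) * volume.real (Icc (-|z| - 1) (-|z|))
      ≤ ∫ x in Icc (-|z| - 1) (-|z|), stdNormalPDF x := by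
    refine setIntegral_ge_of_const_le_real measurableSet_Icc (by simp) (fun x hx => ?_)
      integrable_stdNormalPDF.integrableOn
    refine stdNormalPDF_le_of_abs_le ?_
    rw [abs_le, abs_of_nonneg (by positivity : (0 : ℝ) ≤ |z| + 1)]
    constructor <;> linarith [hx.1, hx.2, abs_nonneg z]
  have hsub : ∫ x in Icc (-|z| - 1) (-|z|), stdNormalPDF x ≤ stdNormalCDF (-|z|) :=
    setIntegral_mono_set integrable_stdNormalPDF.integrableOn
      (Eventually.of_forall fun x => (stdNormalPDF_pos x).le) Icc_subset_Iic_self.eventuallyLE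
  have hvol : volume.real (Icc (-|z| - 1) (-|z|)) = 1 := by
    rw [Real.volume_real_Icc]; norm_num
  rw [hvol, mul_one] at hlower
  linarith

lemma stdNormalPDF_abs_add_one_div_two_le (z : ℝ) :
    stdNormalPDF (|z| + 1) / 2 ≤ stdNormalCDF z * stdNormalCDF (-z) := by
  have hm := stdNormalPDF_abs_add_one_le_stdNormalCDF_neg_abs z
  have hz : stdNormalCDF (-|z|) ≤ stdNormalCDF z := stdNormalCDF_mono (neg_abs_le z)
  have hnz : stdNormalCDF (-|z|) ≤ stdNormalCDF (-z) :=
    stdNormalCDF_mono (neg_le_neg (le_abs_self z))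
  have hsum : stdNormalCDF z + stdNormalCDF (-z) = 1 := by rw [stdNormalCDF_neg]; ring
  have := stdNormalPDF_pos (|z| + 1)
  -- the larger of the two factors is at least `1/2`
  rcases le_total (stdNormalCDF z) (stdNormalCDF (-z)) with h | h <;> nlinarith

lemma stdNormalPDF_sq_le (z : ℝ) :
    stdNormalPDF z ^ 2 ≤ exp 1 * (√(2 * π))⁻¹ * stdNormalPDF (|z| + 1) := by
  have hexp : exp (-z ^ 2 / 2) ^ 2 ≤ exp 1 * exp (-(|z| + 1) ^ 2 / 2) := by
    rw [← exp_nat_mul, ← exp_add, Nat.cast_ofNat]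
    refine exp_le_exp.2 ?_
    nlinarith [sq_nonneg (|z| - 1), sq_abs z]
  calc stdNormalPDF z ^ 2 = (√(2 * π))⁻¹ * ((√(2 * π))⁻¹ * exp (-z ^ 2 / 2) ^ 2) := by
        rw [stdNormalPDF]; ring
    _ ≤ (√(2 * π))⁻¹ * ((√(2 * π))⁻¹ * (exp 1 * exp (-(|z| + 1) ^ 2 / 2))) := by
        gcongr
    _ = exp 1 * (√(2 * π))⁻¹ * stdNormalPDF (|z| + 1) := by rw [stdNormalPDF]; ring

/-- The Fisher information `φ(z)² / (Φ(z) Φ(-z))` carried by the sign of `z + N(0, 1)`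
about the location `z`. -/
noncomputable def probitInfo (z : ℝ) : ℝ :=
  stdNormalPDF z ^ 2 / (stdNormalCDF z * stdNormalCDF (-z))

lemma probitInfo_nonneg (z : ℝ) : 0 ≤ probitInfo z := by
  have := stdNormalCDF_pos z
  have := stdNormalCDF_pos (-z)
  unfold probitInfo
  positivity

lemma probitInfo_le (z : ℝ) : probitInfo z ≤ 2 * exp 1 * (√(2 * π))⁻¹ := by
  have hm := stdNormalPDF_pos (|z| + 1)
  calc probitInfo z
      ≤ exp 1 * (√(2 * π))⁻¹ * stdNormalPDF (|z| + 1) / (stdNormalPDF (|z| + 1) / 2) :=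
        div_le_div₀ (by positivity) (stdNormalPDF_sq_le z) (by positivity)
          (stdNormalPDF_abs_add_one_div_two_le z)
    _ = 2 * exp 1 * (√(2 * π))⁻¹ := by field_simp

@[fun_prop]
lemma measurable_probitInfo : Measurable probitInfo := by
  unfold probitInfo
  fun_prop

lemma integrable_probitInfo_comp {μ : Measure ℝ} [IsFiniteMeasure μ] {f : ℝ → ℝ}
    (hf : Measurable f) : Integrable (fun x => probitInfo (f x)) μ :=
  Integrable.of_bound (measurable_probitInfo.comp hf).aestronglyMeasurable _
    (Eventually.of_forall fun x => by
      rw [Real.norm_of_nonneg (probitInfo_nonneg _)]; exact probitInfo_le _)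

section GaussianReal

variable {μ : ℝ} {v : ℝ≥0}

lemma inv_mul_stdNormalPDF_div {σ : ℝ} (hσ : 0 < σ) (hv : (v : ℝ) = σ ^ 2) (m x : ℝ) :
    σ⁻¹ * stdNormalPDF ((x - m) / σ) = gaussianPDFReal m v x := by
  have hsqrt : √(2 * π * σ ^ 2) = √(2 * π) * σ := by
    rw [Real.sqrt_mul (by positivity), Real.sqrt_sq hσ.le]
  simp only [stdNormalPDF, gaussianPDFReal]
  rw [hv, hsqrt, div_pow]
  field_simp

lemma integrable_gaussianPDFReal_mul_iff (hv : v ≠ 0) {f : ℝ → ℝ} :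
    Integrable (fun x => gaussianPDFReal μ v x * f x) ↔ Integrable f (gaussianReal μ v) := by
  rw [gaussianReal_of_var_ne_zero _ hv, integrable_withDensity_iff_integrable_smul'
    (measurable_gaussianPDF μ v) (ae_of_all _ fun _ => gaussianPDF_lt_top)]
  simp [toReal_gaussianPDF]

lemma integral_gaussianPDFReal_mul (hv : v ≠ 0) (f : ℝ → ℝ) :
    ∫ x, gaussianPDFReal μ v x * f x = ∫ x, f x ∂gaussianReal μ v :=
  (integral_gaussianReal_eq_integral_smul hv).symm

lemma integral_sq_gaussianReal : ∫ x, x ^ 2 ∂gaussianReal μ v = μ ^ 2 + v := by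
  have := variance_eq_sub (memLp_id_gaussianReal (μ := μ) (v := v) 2)
  rw [variance_id_gaussianReal] at this
  simp only [Pi.pow_apply, id_eq, integral_id_gaussianReal] at this
  linarith

lemma integrable_sq_affine_gaussianReal (a b : ℝ) :
    Integrable (fun x => (a + b * (x - μ)) ^ 2) (gaussianReal μ v) :=
  ((memLp_const a).add
    (((memLp_id_gaussianReal 2).sub (memLp_const μ)).const_mul b)).integrable_sq

lemma integral_sq_affine_gaussianReal (a b : ℝ) :
    ∫ x, (a + b * (x - μ)) ^ 2 ∂gaussianReal μ v = a ^ 2 + b ^ 2 * v := by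
  have hlaw := gaussianReal_const_add
    (gaussianReal_const_mul (gaussianReal_sub_const (HasLaw.id (μ := gaussianReal μ v)) μ) b) a
  simp only [id_eq] at hlaw
  rw [← Function.comp_def (fun y : ℝ => y ^ 2), hlaw.integral_comp (by fun_prop),
    integral_sq_gaussianReal]
  simp

end GaussianReal

lemma integrable_prod_and_integral_eq_of_nonneg {α β : Type*} [MeasurableSpace α]
    [MeasurableSpace β] {μ : Measure α} {ν : Measure β} [SFinite μ] [SFinite ν]
    {f : α × β → ℝ} {g : α → ℝ} (hf : Measurable f) (hf0 : 0 ≤ f)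
    (hsec : ∀ a, Integrable (fun b => f (a, b)) ν ∧ ∫ b, f (a, b) ∂ν = g a)
    (hg : Integrable g μ) :
    Integrable f (μ.prod ν) ∧ ∫ p, f p ∂μ.prod ν = ∫ a, g a ∂μ := by
  have hint : Integrable f (μ.prod ν) := by
    refine (integrable_prod_iff hf.aestronglyMeasurable).2
      ⟨ae_of_all _ fun a => (hsec a).1, hg.congr (ae_of_all _ fun a => ?_)⟩
    simp only [Real.norm_of_nonneg (hf0 _), (hsec a).2]
  refine ⟨hint, ?_⟩
  rw [integral_prod f hint]
  simp only [(hsec _).2]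

lemma deriv_log_mul {f g : ℝ → ℝ} {f' g' x : ℝ} (hf : HasDerivAt f f' x)
    (hg : HasDerivAt g g' x) (hfx : f x ≠ 0) (hgx : g x ≠ 0) :
    deriv (fun s => log (f s * g s)) x = f' / f x + g' / g x := by
  rw [((hf.fun_mul hg).log (mul_ne_zero hfx hgx)).deriv]
  field_simp

lemma sq_sub_div_mul_add_sq_add_div_mul {q : ℝ} (hq0 : q ≠ 0) (hq1 : 1 - q ≠ 0) (g d : ℝ) :
    (g - d / (1 - q)) ^ 2 * (1 - q) + (g + d / q) ^ 2 * q = g ^ 2 + d ^ 2 / (q * (1 - q)) := by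
  field_simp
  ring

section LGO

variable {h t τ σa σq : ℝ}

noncomputable def lgoAnalogDensity (h σa θ xa : ℝ) : ℝ :=
  stdNormalPDF θ * (σa⁻¹ * stdNormalPDF ((xa - h * θ) / σa))

noncomputable def lgoScore (h t τ σa σq θ xa : ℝ) (b : Fin 2) : ℝ :=
  -θ + h / σa ^ 2 * (xa - h * θ) +
    t / σq * stdNormalPDF ((t * θ - τ) / σq) *
      (((b : ℕ) : ℝ) / stdNormalCDF ((t * θ - τ) / σq) -
        (1 - ((b : ℕ) : ℝ)) / (1 - stdNormalCDF ((t * θ - τ) / σq)))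

lemma lgoDensity_eq (θ xa : ℝ) (b : Fin 2) :
    lgoDensity h t τ σa σq θ xa b = lgoAnalogDensity h σa θ xa *
      stdNormalCDF ((t * θ - τ) / σq) ^ (b : ℕ) *
        (1 - stdNormalCDF ((t * θ - τ) / σq)) ^ (1 - (b : ℕ)) :=
  rfl

lemma lgoAnalogDensity_ne_zero (hσa : σa ≠ 0) (θ xa : ℝ) :
    lgoAnalogDensity h σa θ xa ≠ 0 :=
  mul_ne_zero (stdNormalPDF_pos θ).ne'
    (mul_ne_zero (inv_ne_zero hσa) (stdNormalPDF_pos _).ne')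

lemma lgoDensity_nonneg (hσa : 0 < σa) (θ xa : ℝ) (b : Fin 2) :
    0 ≤ lgoDensity h t τ σa σq θ xa b := by
  have := stdNormalPDF_pos θ
  have := stdNormalPDF_pos ((xa - h * θ) / σa)
  have := stdNormalCDF_pos ((t * θ - τ) / σq)
  have := sub_pos.2 (stdNormalCDF_lt_one ((t * θ - τ) / σq))
  rw [lgoDensity_eq, lgoAnalogDensity]
  positivity

lemma hasDerivAt_lgoAnalogDensity (hσa : σa ≠ 0) (θ xa : ℝ) :
    HasDerivAt (fun s => lgoAnalogDensity h σa s xa)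
      (lgoAnalogDensity h σa θ xa * (-θ + h / σa ^ 2 * (xa - h * θ))) θ := by
  have hu : HasDerivAt (fun s => (xa - h * s) / σa) (-h / σa) θ := by
    simpa [neg_div] using (((hasDerivAt_id θ).const_mul h).const_sub xa).div_const σa
  refine ((hasDerivAt_stdNormalPDF θ).mul
    (((hasDerivAt_stdNormalPDF _).comp θ hu).const_mul σa⁻¹)).congr_deriv ?_
  simp only [lgoAnalogDensity, Function.comp_apply]
  field_simp

lemma hasDerivAt_stdNormalCDF_affine (θ : ℝ) :
    HasDerivAt (fun s => stdNormalCDF ((t * s - τ) / σq))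
      (t / σq * stdNormalPDF ((t * θ - τ) / σq)) θ := by
  have hz : HasDerivAt (fun s => (t * s - τ) / σq) (t / σq) θ := by
    simpa using (((hasDerivAt_id θ).const_mul t).sub_const τ).div_const σq
  exact ((hasDerivAt_stdNormalCDF _).comp θ hz).congr_deriv (mul_comm _ _)

lemma deriv_log_lgoDensity (hσa : σa ≠ 0) (θ xa : ℝ) (b : Fin 2) :
    deriv (fun s => log (lgoDensity h t τ σa σq s xa b)) θ =
      lgoScore h t τ σa σq θ xa b := by
  have hA := hasDerivAt_lgoAnalogDensity (h := h) hσa θ xa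
  have hq := hasDerivAt_stdNormalCDF_affine (t := t) (τ := τ) (σq := σq) θ
  have hq0 := (stdNormalCDF_pos ((t * θ - τ) / σq)).ne'
  have hq1 := (sub_pos.2 (stdNormalCDF_lt_one ((t * θ - τ) / σq))).ne'
  fin_cases b
  · simp only [lgoDensity_eq, Fin.zero_eta, Fin.val_zero, pow_zero, mul_one, tsub_zero, pow_one]
    rw [deriv_log_mul hA (hq.const_sub 1) (lgoAnalogDensity_ne_zero hσa θ xa) hq1,
      mul_div_cancel_left₀ _ (lgoAnalogDensity_ne_zero hσa θ xa)]
    simp [lgoScore]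
    field_simp
  · simp only [lgoDensity_eq, Fin.mk_one, Fin.val_one, pow_one, tsub_self, pow_zero, mul_one]
    rw [deriv_log_mul hA hq (lgoAnalogDensity_ne_zero hσa θ xa) hq0,
      mul_div_cancel_left₀ _ (lgoAnalogDensity_ne_zero hσa θ xa)]
    simp [lgoScore]
    field_simp

lemma sum_lgoScore_sq_mul_lgoDensity (θ xa : ℝ) :
    ∑ b : Fin 2, lgoScore h t τ σa σq θ xa b ^ 2 * lgoDensity h t τ σa σq θ xa b =
      lgoAnalogDensity h σa θ xa *
        ((-θ + h / σa ^ 2 * (xa - h * θ)) ^ 2 +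
          (t / σq) ^ 2 * probitInfo ((t * θ - τ) / σq)) := by
  rw [Fin.sum_univ_two, lgoDensity_eq, lgoDensity_eq]
  simp only [Fin.val_zero, Fin.val_one, pow_zero, pow_one, tsub_zero, tsub_self, mul_one]
  set z := (t * θ - τ) / σq
  set g := -θ + h / σa ^ 2 * (xa - h * θ)
  set d := t / σq * stdNormalPDF z
  have hq0 := (stdNormalCDF_pos z).ne'
  have hq1 := (sub_pos.2 (stdNormalCDF_lt_one z)).ne'
  have hscore0 : lgoScore h t τ σa σq θ xa 0 = g - d / (1 - stdNormalCDF z) := by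
    simp [lgoScore, g, d, z]; ring
  have hscore1 : lgoScore h t τ σa σq θ xa 1 = g + d / stdNormalCDF z := by
    simp [lgoScore, g, d, z]; ring
  rw [hscore0, hscore1, probitInfo, stdNormalCDF_neg]
  calc _ = lgoAnalogDensity h σa θ xa *
        ((g - d / (1 - stdNormalCDF z)) ^ 2 * (1 - stdNormalCDF z) +
          (g + d / stdNormalCDF z) ^ 2 * stdNormalCDF z) := by ring
    _ = _ := by rw [sq_sub_div_mul_add_sq_add_div_mul hq0 hq1]; ring

lemma measurable_lgoScore_sq_mul_lgoDensity :
    Measurable fun p : ℝ × ℝ × Fin 2 =>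
      lgoScore h t τ σa σq p.1 p.2.1 p.2.2 ^ 2 * lgoDensity h t τ σa σq p.1 p.2.1 p.2.2 := by
  simp only [lgoScore, lgoDensity_eq, lgoAnalogDensity]
  fun_prop

lemma lgoAnalogDensity_eq_mul_gaussianPDFReal (hσa : 0 < σa) (θ xa : ℝ) :
    lgoAnalogDensity h σa θ xa =
      stdNormalPDF θ * gaussianPDFReal (h * θ) (σa ^ 2).toNNReal xa := by
  rw [lgoAnalogDensity, inv_mul_stdNormalPDF_div hσa (Real.coe_toNNReal _ (sq_nonneg σa))]

lemma integrable_and_integral_lgoAnalogDensity_mul (hσa : 0 < σa) (θ c : ℝ) :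
    Integrable (fun xa =>
        lgoAnalogDensity h σa θ xa * ((-θ + h / σa ^ 2 * (xa - h * θ)) ^ 2 + c)) ∧
      ∫ xa, lgoAnalogDensity h σa θ xa * ((-θ + h / σa ^ 2 * (xa - h * θ)) ^ 2 + c) =
        stdNormalPDF θ * (θ ^ 2 + h ^ 2 / σa ^ 2 + c) := by
  have hv : (σa ^ 2).toNNReal ≠ 0 := (Real.toNNReal_pos.2 (by positivity)).ne'
  have hsq := integrable_sq_affine_gaussianReal (μ := h * θ) (v := (σa ^ 2).toNNReal)
    (-θ) (h / σa ^ 2)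
  have hint : Integrable (fun xa => (-θ + h / σa ^ 2 * (xa - h * θ)) ^ 2 + c)
      (gaussianReal (h * θ) (σa ^ 2).toNNReal) := hsq.add (integrable_const c)
  simp only [lgoAnalogDensity_eq_mul_gaussianPDFReal hσa, mul_assoc]
  refine ⟨((integrable_gaussianPDFReal_mul_iff hv).2 hint).const_mul _, ?_⟩
  rw [integral_const_mul, integral_gaussianPDFReal_mul hv, integral_add hsq (integrable_const c),
    integral_sq_affine_gaussianReal, Real.coe_toNNReal _ (sq_nonneg σa)]
  simp only [integral_const, probReal_univ, smul_eq_mul, one_mul]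
  field_simp

lemma integrable_and_integral_stdNormalPDF_mul (K c : ℝ) {f : ℝ → ℝ} (hf : Measurable f) :
    Integrable (fun θ => stdNormalPDF θ * (θ ^ 2 + K + c * probitInfo (f θ))) ∧
      ∫ θ, stdNormalPDF θ * (θ ^ 2 + K + c * probitInfo (f θ)) =
        1 + K + c * ∫ θ, probitInfo (f θ) ∂gaussianReal 0 1 := by
  have hsq : Integrable (fun θ : ℝ => θ ^ 2) (gaussianReal 0 1) := by
    simpa using integrable_sq_affine_gaussianReal (μ := 0) (v := 1) 0 1
  have hsqK : Integrable (fun θ : ℝ => θ ^ 2 + K) (gaussianReal 0 1) :=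
    hsq.add (integrable_const K)
  have hinfo : Integrable (fun θ => c * probitInfo (f θ)) (gaussianReal 0 1) :=
    (integrable_probitInfo_comp hf).const_mul c
  rw [stdNormalPDF_eq_gaussianPDFReal, integrable_gaussianPDFReal_mul_iff one_ne_zero,
    integral_gaussianPDFReal_mul one_ne_zero]
  refine ⟨hsqK.add hinfo, ?_⟩
  rw [integral_add hsqK hinfo, integral_add hsq (integrable_const K), integral_sq_gaussianReal,
    integral_const_mul]
  simp

end LGO

theorem lgo_bayesian_fisher_information_general
    (h t τ σa σq : ℝ) (hσa : 0 < σa) :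
    ∫ p : ℝ × ℝ × Fin 2,
        (deriv (fun s : ℝ => Real.log (lgoDensity h t τ σa σq s p.2.1 p.2.2)) p.1) ^ 2 *
          lgoDensity h t τ σa σq p.1 p.2.1 p.2.2
        ∂(Measure.prod volume (Measure.prod volume (Measure.count : Measure (Fin 2))))
      = 1 + h ^ 2 / σa ^ 2 +
          t ^ 2 / σq ^ 2 *
            ∫ θ, stdNormalPDF ((t * θ - τ) / σq) ^ 2 /
                (stdNormalCDF ((t * θ - τ) / σq) * stdNormalCDF (-((t * θ - τ) / σq)))
              ∂(gaussianReal 0 1) := by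
  simp only [deriv_log_lgoDensity hσa.ne']
  have hmeas := measurable_lgoScore_sq_mul_lgoDensity (h := h) (t := t) (τ := τ) (σa := σa)
    (σq := σq)
  have hnonneg : ∀ θ xa b,
      0 ≤ lgoScore h t τ σa σq θ xa b ^ 2 * lgoDensity h t τ σa σq θ xa b :=
    fun θ xa b => mul_nonneg (sq_nonneg _) (lgoDensity_nonneg hσa θ xa b)
  have hprior := integrable_and_integral_stdNormalPDF_mul (h ^ 2 / σa ^ 2) ((t / σq) ^ 2)
    (f := fun θ => (t * θ - τ) / σq) (by fun_prop)
  have hfiber (θ : ℝ) := integrable_prod_and_integral_eq_of_nonneg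
    (f := fun y : ℝ × Fin 2 =>
      lgoScore h t τ σa σq θ y.1 y.2 ^ 2 * lgoDensity h t τ σa σq θ y.1 y.2)
    (hmeas.comp measurable_prodMk_left) (fun y => hnonneg θ y.1 y.2)
    (fun xa => ⟨Integrable.of_finite, by rw [integral_count, sum_lgoScore_sq_mul_lgoDensity]⟩)
    (integrable_and_integral_lgoAnalogDensity_mul hσa θ _).1
  rw [(integrable_prod_and_integral_eq_of_nonneg hmeas (fun p => hnonneg p.1 p.2.1 p.2.2)
    (fun θ => ⟨(hfiber θ).1, (hfiber θ).2.trans ?_⟩) hprior.1).2, hprior.2, div_pow]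
  · rfl
  · rw [(integrable_and_integral_lgoAnalogDensity_mul hσa θ _).2]

/-- Bayesian Fisher information of the scalar LGO model (Eq. (fim_LGO), real
scalar case `M = 1`): `J = 1 + h²/σ_a² + (t²/σ_q²) · E[φ(Z)²/(Φ(Z)Φ(−Z))]`,
where `Z = (tθ − τ)/σ_q` and the expectation is over `θ ~ N(0,1)`. -/
theorem lgo_bayesian_fisher_information
    (h t τ σa σq : ℝ) (hσa : 0 < σa) (hσq : 0 < σq) :
    ∫ p : ℝ × ℝ × Fin 2,
        (deriv (fun s : ℝ => Real.log (lgoDensity h t τ σa σq s p.2.1 p.2.2)) p.1) ^ 2 *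
          lgoDensity h t τ σa σq p.1 p.2.1 p.2.2
        ∂(Measure.prod volume (Measure.prod volume (Measure.count : Measure (Fin 2))))
      = 1 + h ^ 2 / σa ^ 2 +
          t ^ 2 / σq ^ 2 *
            ∫ θ, stdNormalPDF ((t * θ - τ) / σq) ^ 2 /
                (stdNormalCDF ((t * θ - τ) / σq) * stdNormalCDF (-((t * θ - τ) / σq)))
              ∂(gaussianReal 0 1) :=
  lgo_bayesian_fisher_information_general h t τ σa σq hσa
end
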